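/- A family H of subsets of [n] is r-cross-free if and only if cl_r(H) is r-cross-free. -/
import Mathlib


/-- A hypergraph on vertex set `Fin n`, identified with its family of hyperedges. -/
abbrev Family (n : ℕ) := Set (Finset (Fin n))

/-- Membership in the class `K_r(n)`: rules (k0), (k1), (k2). -/
def MemK (r n : ℕ) (E : Family n) : Prop :=
  (∀ X : Finset (Fin n), X.card ≤ r → X ∈ E) ∧
  (∀ A ∈ E, Aᶜ ∈ E) ∧
  (∀ A ∈ E, ∀ B ∈ E, r ≤ (A ∩ B).card → A ∪ B ∈ E)

/-- Membership in the class `K⊥_r(n)`: only rules (k0) and (k1). -/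
def MemKbot (r n : ℕ) (E : Family n) : Prop :=
  (∀ X : Finset (Fin n), X.card ≤ r → X ∈ E) ∧
  (∀ A ∈ E, Aᶜ ∈ E)

/-- Closure of `H` in `K_r(n)`: intersection of all members of `K_r(n)` containing `H`. -/
def clr (r n : ℕ) (H : Family n) : Family n :=
  ⋂₀ {E | MemK r n E ∧ H ⊆ E}

/-- Closure of `H` in `K⊥_r(n)`. -/
def clbot (r n : ℕ) (H : Family n) : Family n :=
  ⋂₀ {E | MemKbot r n E ∧ H ⊆ E}

/-- `A` and `B` are `r`-orthogonal. -/
def Ortho (r n : ℕ) (A B : Finset (Fin n)) : Prop :=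
  clr r n {A, B} = clbot r n {A, B}

/-- A family is `r`-cross-free if all pairs of members are `r`-orthogonal. -/
def CrossFree (r n : ℕ) (H : Family n) : Prop :=
  ∀ A ∈ H, ∀ B ∈ H, Ortho r n A B

/-! ### Auxiliary lemmas -/

lemma memK_clr (r n : ℕ) (H : Family n) : MemK r n (clr r n H) := by
  refine ⟨?_, ?_, ?_⟩
  · intro X hX E hE; exact hE.1.1 X hX
  · intro A hA E hE; exact hE.1.2.1 A (hA E hE)
  · intro A hA B hB hc E hE; exact hE.1.2.2 A (hA E hE) B (hB E hE) hc

lemma memKbot_clbot (r n : ℕ) (H : Family n) : MemKbot r n (clbot r n H) := by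
  refine ⟨?_, ?_⟩
  · intro X hX E hE; exact hE.1.1 X hX
  · intro A hA E hE; exact hE.1.2 A (hA E hE)

lemma subset_clr (r n : ℕ) (H : Family n) : H ⊆ clr r n H :=
  fun X hX E hE => hE.2 hX

lemma subset_clbot (r n : ℕ) (H : Family n) : H ⊆ clbot r n H :=
  fun X hX E hE => hE.2 hX

lemma clr_min {r n : ℕ} {H : Family n} {E : Family n} (hE : MemK r n E) (hHE : H ⊆ E) :
    clr r n H ⊆ E :=
  Set.sInter_subset_of_mem ⟨hE, hHE⟩

lemma clbot_min {r n : ℕ} {H : Family n} {E : Family n} (hE : MemKbot r n E) (hHE : H ⊆ E) :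
    clbot r n H ⊆ E :=
  Set.sInter_subset_of_mem ⟨hE, hHE⟩

lemma clbot_subset_clr (r n : ℕ) (H : Family n) : clbot r n H ⊆ clr r n H := by
  intro X hX E hE
  exact hX E ⟨⟨hE.1.1, hE.1.2.1⟩, hE.2⟩

lemma trivial_mem {r n : ℕ} {E : Family n} (hE : MemKbot r n E) {X : Finset (Fin n)}
    (hX : X.card ≤ r ∨ Xᶜ.card ≤ r) : X ∈ E := by
  rcases hX with h | h
  · exact hE.1 X h
  · have := hE.2 Xᶜ (hE.1 Xᶜ h)
    rwa [compl_compl] at this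

/-- The explicit description of `clbot {A, B}` when `A` is trivial. -/
lemma clbot_pair_trivial {r n : ℕ} {A B : Finset (Fin n)} (hA : A.card ≤ r ∨ Aᶜ.card ≤ r) :
    clbot r n {A, B} = {Y | Y.card ≤ r ∨ Yᶜ.card ≤ r ∨ Y = B ∨ Y = Bᶜ} := by
  apply Set.Subset.antisymm
  · apply clbot_min
    · refine ⟨fun X hX => Or.inl hX, ?_⟩
      intro X hX
      rcases hX with h | h | rfl | rfl
      · right; left; rwa [compl_compl]
      · left; exact h
      · right; right; right; rfl
      · right; right; left; rw [compl_compl]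
    · intro X hX
      simp only [Set.mem_insert_iff, Set.mem_singleton_iff] at hX
      rcases hX with rfl | rfl
      · rcases hA with h | h
        · exact Or.inl h
        · exact Or.inr (Or.inl h)
      · right; right; left; rfl
  · intro Y hY
    have hbot := memKbot_clbot r n {A, B}
    rcases hY with h | h | rfl | rfl
    · exact trivial_mem hbot (Or.inl h)
    · exact trivial_mem hbot (Or.inr h)
    · exact subset_clbot r n _ (Set.mem_insert_of_mem _ rfl)
    · exact hbot.2 B (subset_clbot r n _ (Set.mem_insert_of_mem _ rfl))

/-- The family `{Y | Y trivialor Y ∈ {B, Bᶜ}}` satisfies rule (k2). -/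
lemma memK_trivial_pair (r n : ℕ) (B : Finset (Fin n)) :
    MemK r n {Y : Finset (Fin n) | Y.card ≤ r ∨ Yᶜ.card ≤ r ∨ Y = B ∨ Y = Bᶜ} := by
  refine ⟨fun X hX => Or.inl hX, ?_, ?_⟩
  · intro X hX
    rcases hX with h | h | rfl | rfl
    · right; left; rwa [compl_compl]
    · left; exact h
    · right; right; right; rfl
    · right; right; left; rw [compl_compl]
  · intro X hX Y hY hc
    -- co-small cases
    by_cases hXc : Xᶜ.card ≤ r
    · right; left
      calc (X ∪ Y)ᶜ.card ≤ Xᶜ.card := Finset.card_le_card (by rw [Finset.compl_union]; exact Finset.inter_subset_left)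
        _ ≤ r := hXc
    by_cases hYc : Yᶜ.card ≤ r
    · right; left
      calc (X ∪ Y)ᶜ.card ≤ Yᶜ.card := Finset.card_le_card (by rw [Finset.compl_union]; exact Finset.inter_subset_right)
        _ ≤ r := hYc
    -- small cases
    by_cases hXs : X.card ≤ r
    · have h1 : X ∩ Y = X := by
        apply Finset.eq_of_subset_of_card_le Finset.inter_subset_left
        exact le_trans hXs hc
      have h2 : X ⊆ Y := by rw [← h1]; exact Finset.inter_subset_right
      rwa [Finset.union_eq_right.mpr h2]
    by_cases hYs : Y.card ≤ r
    · have h1 : X ∩ Y = Y := by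
        apply Finset.eq_of_subset_of_card_le Finset.inter_subset_right
        exact le_trans hYs hc
      have h2 : Y ⊆ X := by rw [← h1]; exact Finset.inter_subset_left
      rwa [Finset.union_eq_left.mpr h2]
    -- remaining: X, Y ∈ {B, Bᶜ}
    have hX' : X = B ∨ X = Bᶜ := by
      rcases hX with h | h | h | h
      exacts [absurd h hXs, absurd h hXc, Or.inl h, Or.inr h]
    have hY' : Y = B ∨ Y = Bᶜ := by
      rcases hY with h | h | h | h
      exacts [absurd h hYs, absurd h hYc, Or.inl h, Or.inr h]
    rcases hX' with rfl | rfl <;> rcases hY' with rfl | rfl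
    · rw [Finset.union_self]; right; right; left; rfl
    · right; left; rw [Finset.union_compl, Finset.compl_univ]; simp
    · right; left; rw [Finset.union_comm, Finset.union_compl, Finset.compl_univ]; simp
    · rw [Finset.union_self]; right; right; right; rfl

/-- A trivial set is `r`-orthogonal to everything. -/
lemma ortho_of_trivial {r n : ℕ} {A : Finset (Fin n)} (hA : A.card ≤ r ∨ Aᶜ.card ≤ r)
    (B : Finset (Fin n)) : Ortho r n A B := by
  unfold Ortho
  apply Set.Subset.antisymm
  · rw [clbot_pair_trivial hA]
    apply clr_min (memK_trivial_pair r n B)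
    intro X hX
    simp only [Set.mem_insert_iff, Set.mem_singleton_iff] at hX
    rcases hX with rfl | rfl
    · rcases hA with h | h
      · exact Or.inl h
      · exact Or.inr (Or.inl h)
    · right; right; left; rfl
  · exact clbot_subset_clr r n {A, B}

lemma ortho_symm {r n : ℕ} {A B : Finset (Fin n)} (h : Ortho r n A B) : Ortho r n B A := by
  unfold Ortho at *
  rwa [Set.pair_comm B A]

lemma clr_pair_compl_left {r n : ℕ} (A B : Finset (Fin n)) :
    clr r n {Aᶜ, B} = clr r n {A, B} := by
  apply Set.Subset.antisymm
  · apply clr_min (memK_clr r n {A, B})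
    intro X hX
    simp only [Set.mem_insert_iff, Set.mem_singleton_iff] at hX
    rcases hX with rfl | rfl
    · exact (memK_clr r n {A, B}).2.1 A (subset_clr r n _ (Set.mem_insert _ _))
    · exact subset_clr r n _ (Set.mem_insert_of_mem _ rfl)
  · apply clr_min (memK_clr r n {Aᶜ, B})
    intro X hX
    simp only [Set.mem_insert_iff, Set.mem_singleton_iff] at hX
    rcases hX with rfl | rfl
    · have := (memK_clr r n {Xᶜ, B}).2.1 Xᶜ (subset_clr r n _ (Set.mem_insert _ _))
      rwa [compl_compl] at this
    · exact subset_clr r n _ (Set.mem_insert_of_mem _ rfl)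

lemma clbot_pair_compl_left {r n : ℕ} (A B : Finset (Fin n)) :
    clbot r n {Aᶜ, B} = clbot r n {A, B} := by
  apply Set.Subset.antisymm
  · apply clbot_min (memKbot_clbot r n {A, B})
    intro X hX
    simp only [Set.mem_insert_iff, Set.mem_singleton_iff] at hX
    rcases hX with rfl | rfl
    · exact (memKbot_clbot r n {A, B}).2 A (subset_clbot r n _ (Set.mem_insert _ _))
    · exact subset_clbot r n _ (Set.mem_insert_of_mem _ rfl)
  · apply clbot_min (memKbot_clbot r n {Aᶜ, B})
    intro X hX
    simp only [Set.mem_insert_iff, Set.mem_singleton_iff] at hX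
    rcases hX with rfl | rfl
    · have := (memKbot_clbot r n {Xᶜ, B}).2 Xᶜ (subset_clbot r n _ (Set.mem_insert _ _))
      rwa [compl_compl] at this
    · exact subset_clbot r n _ (Set.mem_insert_of_mem _ rfl)

lemma ortho_compl_left {r n : ℕ} {A B : Finset (Fin n)} (h : Ortho r n A B) :
    Ortho r n Aᶜ B := by
  unfold Ortho at *
  rw [clr_pair_compl_left, clbot_pair_compl_left]; exact h

lemma ortho_compl_right {r n : ℕ} {A B : Finset (Fin n)} (h : Ortho r n A B) :
    Ortho r n A Bᶜ :=
  ortho_symm (ortho_compl_left (ortho_symm h))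

/-- Explicit upper bound on `clbot H`. -/
lemma clbot_subset_descr (r n : ℕ) (H : Family n) :
    clbot r n H ⊆ {Y | Y.card ≤ r ∨ Yᶜ.card ≤ r ∨ Y ∈ H ∨ Yᶜ ∈ H} := by
  apply clbot_min
  · refine ⟨fun X hX => Or.inl hX, ?_⟩
    intro X hX
    rcases hX with h | h | h | h
    · right; left; rwa [compl_compl]
    · left; exact h
    · right; right; right; rwa [compl_compl]
    · right; right; left; exact h
  · intro X hX; right; right; left; exact hX

/-- If `H` is cross-free, then so is `clbot H`. -/
lemma crossFree_clbot {r n : ℕ} {H : Family n} (hH : CrossFree r n H) :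
    CrossFree r n (clbot r n H) := by
  intro A hA B hB
  have hA' := clbot_subset_descr r n H hA
  have hB' := clbot_subset_descr r n H hB
  rcases hA' with h | h | hAH | hAH
  · exact ortho_of_trivial (Or.inl h) B
  · exact ortho_of_trivial (Or.inr h) B
  all_goals rcases hB' with h | h | hBH | hBH
  · exact ortho_symm (ortho_of_trivial (Or.inl h) A)
  · exact ortho_symm (ortho_of_trivial (Or.inr h) A)
  · exact hH A hAH B hBH
  · have := ortho_compl_right (hH A hAH Bᶜ hBH)
    rwa [compl_compl] at this
  · exact ortho_symm (ortho_of_trivial (Or.inl h) A)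
  · exact ortho_symm (ortho_of_trivial (Or.inr h) A)
  · have := ortho_compl_left (hH Aᶜ hAH B hBH)
    rwa [compl_compl] at this
  · have := ortho_compl_left (ortho_compl_right (hH Aᶜ hAH Bᶜ hBH))
    rwa [compl_compl, compl_compl] at this

/-- If `H` is cross-free, then `clbot H` satisfies all three rules. -/
lemma memK_clbot_of_crossFree {r n : ℕ} {H : Family n} (hH : CrossFree r n H) :
    MemK r n (clbot r n H) := by
  have hcf := crossFree_clbot hH
  refine ⟨(memKbot_clbot r n H).1, (memKbot_clbot r n H).2, ?_⟩
  intro A hA B hB hc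
  have hortho : Ortho r n A B := hcf A hA B hB
  have hmem : A ∪ B ∈ clr r n {A, B} := by
    have hK := memK_clr r n {A, B}
    exact hK.2.2 A (subset_clr r n _ (by left; rfl)) B (subset_clr r n _ (by right; rfl)) hc
  rw [hortho] at hmem
  have : clbot r n {A, B} ⊆ clbot r n H := by
    apply clbot_min (memKbot_clbot r n H)
    intro X hX
    simp only [Set.mem_insert_iff, Set.mem_singleton_iff] at hX
    rcases hX with rfl | rfl
    · exact hA
    · exact hB
  exact this hmem

lemma clr_eq_clbot_of_crossFree {r n : ℕ} {H : Family n} (hH : CrossFree r n H) :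
    clr r n H = clbot r n H :=
  Set.Subset.antisymm (clr_min (memK_clbot_of_crossFree hH) (subset_clbot r n H))
    (clbot_subset_clr r n H)

theorem cross_free_iff_closure_cross_free (r n : ℕ) (H : Family n) :
    CrossFree r n H ↔ CrossFree r n (clr r n H) := by
  constructor
  · intro hH
    rw [clr_eq_clbot_of_crossFree hH]
    exact crossFree_clbot hH
  · intro hcl A hA B hB
    exact hcl A (subset_clr r n H hA) B (subset_clr r n H hB)
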